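/- Let (A,B) be a NITA with non-real b_3 ∈ B of degree 3 satisfying b_3·b̄_3 = 1 + c_8 and b_3² = b̄_3 + b_6 where b_6 ∈ B is non-real, with no nontrivial basis elements of degree 1 or 2, and suppose b_3·b_6 = c_8 + b_10 with b_10 ∈ B real of degree 10. Then: (1) b̄_3·b_6 = b_3 + b_15 for some b_15 ∈ B of degree 15; (2) b_3·c_8 = b_3 + b̄_6 + b_15; (3) b_3·b_10 = b_15 + b̄_6 + c̄_9 for some c_9 ∈ B of degree 9; (4) b_3·b_15 = 2·b̄_15 + b_6 + c_9; and (5) b_6² = 2·b̄_6 + c̄_9 + b_15. -/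

import Mathlib

/-- A normalized table algebra datum on a commutative `ℂ`-algebra `A`:
a distinguished basis `B` containing `1`, an involutive algebra
endomorphism `bar` permuting `B`, a bilinear form for which `B` is
orthonormal and which satisfies `(a, bc) = (a·b̄, c)`, nonnegative real
structure constants, and a degree homomorphism positive on `B`. -/
structure TAData (A : Type) [CommRing A] [Algebra ℂ A] : Type where
  B : Finset A
  one_mem : (1 : A) ∈ B
  indep : LinearIndependent ℂ (fun b : {x : A // x ∈ B} => (b : A))
  span_top : Submodule.span ℂ (B : Set A) = ⊤
  bar : A →ₐ[ℂ] A
  bar_bar : ∀ a : A, bar (bar a) = a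
  bar_mem : ∀ b ∈ B, bar b ∈ B
  ip : A →ₗ[ℂ] A →ₗ[ℂ] ℂ
  ip_symm : ∀ a b : A, ip a b = ip b a
  ip_self : ∀ b ∈ B, ip b b = 1
  ip_ne : ∀ b ∈ B, ∀ c ∈ B, b ≠ c → ip b c = 0
  ip_assoc : ∀ a b c : A, ip a (b * c) = ip (a * bar b) c
  struct_nonneg : ∀ b ∈ B, ∀ c ∈ B, ∀ d ∈ B, ∃ r : ℝ, 0 ≤ r ∧ ip (b * c) d = (r : ℂ)
  deg : A →ₐ[ℂ] ℂ
  deg_pos : ∀ b ∈ B, ∃ r : ℝ, 0 < r ∧ deg b = (r : ℂ)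

namespace TAData

variable {A : Type} [CommRing A] [Algebra ℂ A]

/-- Integrality (making a table algebra a NITA): all structure constants are
nonnegative integers and all degrees are positive integers. -/
def Integral (T : TAData A) : Prop :=
  (∀ b ∈ T.B, ∀ c ∈ T.B, ∀ d ∈ T.B, ∃ n : ℕ, T.ip (b * c) d = (n : ℂ)) ∧
  (∀ b ∈ T.B, ∃ n : ℕ, 0 < n ∧ T.deg b = (n : ℂ))

/-- `L₁(B) = {1}` and `L₂(B) = ∅`: no nontrivial basis elements of degree 1 or 2. -/
def NoSmall (T : TAData A) : Prop :=
  (∀ b ∈ T.B, T.deg b = 1 → b = 1) ∧ (∀ b ∈ T.B, T.deg b ≠ 2)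

/-- The table algebra is generated (as an algebra) by `b` (and its conjugate). -/
def GeneratedBy (T : TAData A) (b : A) : Prop :=
  Algebra.adjoin ℂ ({b, T.bar b} : Set A) = ⊤

/-- A table subset of `B`: contains `1`, closed under the involution and under
supports of products. -/
def IsTableSubset (T : TAData A) (C : Set A) : Prop :=
  C ⊆ ↑T.B ∧ (1 : A) ∈ C ∧ (∀ b ∈ C, T.bar b ∈ C) ∧
    ∀ b ∈ C, ∀ c ∈ C, ∀ d ∈ T.B, T.ip (b * c) d ≠ 0 → d ∈ C

end TAData

/-!
Everything is computed through inner products with basis elements, using Frobenius reciprocity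
`(xy, z) = (y, x̄z)`. An element with coordinates in `ℕ` is a basis element as soon as its norm is
`1`, or as soon as each of its constituents has more than half its degree; and because
`L₁(B) = {1}` and `L₂(B) = ∅`, such an element of degree `< 3` without constituent `1` vanishes.

Reciprocity gives `(b̄₃b₆, b₃) = 1` and `‖b̄₃b₆‖² = ‖b₃b₆‖² = 2`, which produces `b₁₅`, and (2)
is then algebra. The product `b₃b₁₀` contains `b̄₆` and `b₁₅`, and the remainder, of degree 9, has
no constituent of degree `≤ 4` (degrees forbid `b₁₀` in `b̄₃d` for `deg d ≤ 4`), so it is a basis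
element `c̄₉`; (5) is again algebra. Finally the coefficients `1, 2, 1` of `b₆, b̄₁₅, c₉` in
`b₃b₁₅` come from associativity (the coefficient of `b₁₀` in `b₆b₁₅` computed in two ways), and
they exhaust its degree `45`.
-/

namespace TAData

variable {A : Type} [CommRing A] [Algebra ℂ A] (T : TAData A)

theorem ip_eq_zero_of_deg_ne {b c : A} (hb : b ∈ T.B) (hc : c ∈ T.B)
    (h : T.deg b ≠ T.deg c) : T.ip b c = 0 :=
  T.ip_ne b hb c hc fun hbc => h (congrArg T.deg hbc)

theorem ip_mul_left (x y z : A) : T.ip (x * y) z = T.ip y (T.bar x * z) := by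
  rw [T.ip_assoc, T.bar_bar, mul_comm]

theorem ip_bar (a b : A) : T.ip (T.bar a) (T.bar b) = T.ip a b := by
  have key : ∀ x y : A, T.ip x y = T.ip (x * T.bar y) 1 := fun x y => by
    simpa only [mul_one] using T.ip_assoc x y 1
  rw [T.ip_symm, key, T.bar_bar, mul_comm, ← key]

theorem ip_bar_mul_self (x y : A) :
    T.ip (T.bar x * y) (T.bar x * y) = T.ip (x * y) (x * y) := by
  rw [T.ip_mul_left, T.ip_mul_left, T.bar_bar, mul_left_comm]

theorem ip_mul_bar_comm (x y z : A) : T.ip (x * y) (T.bar z) = T.ip (x * z) (T.bar y) := by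
  rw [T.ip_mul_left, T.ip_symm, ← T.ip_bar, map_mul, T.bar_bar, T.bar_bar]

theorem sum_ip_smul (a : A) : ∑ d ∈ T.B, T.ip a d • d = a := by
  have ha : a ∈ Submodule.span ℂ (T.B : Set A) := T.span_top ▸ Submodule.mem_top
  induction ha using Submodule.span_induction with
  | mem b hb =>
    rw [Finset.sum_eq_single_of_mem b hb fun d hd hdb => by
      rw [T.ip_ne b hb d hd hdb.symm, zero_smul], T.ip_self b hb, one_smul]
  | zero => simp only [map_zero, LinearMap.zero_apply, zero_smul, Finset.sum_const_zero]
  | add x y _ _ hx hy =>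
    simp only [map_add, LinearMap.add_apply, add_smul, Finset.sum_add_distrib, hx, hy]
  | smul r x _ hx =>
    simp only [map_smul, LinearMap.smul_apply, smul_eq_mul, mul_smul, ← Finset.smul_sum, hx]

theorem eq_zero_of_forall_ip_eq_zero {a : A} (h : ∀ d ∈ T.B, T.ip a d = 0) : a = 0 := by
  rw [← T.sum_ip_smul a]
  exact Finset.sum_eq_zero fun d hd => by rw [h d hd, zero_smul]

theorem exists_ip_ne_zero {a : A} (ha : a ≠ 0) : ∃ d ∈ T.B, T.ip a d ≠ 0 := by
  by_contra! h
  exact ha (T.eq_zero_of_forall_ip_eq_zero h)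

theorem ip_self_eq_sum_sq (a : A) : T.ip a a = ∑ d ∈ T.B, T.ip a d ^ 2 := by
  calc T.ip a a = T.ip a (∑ d ∈ T.B, T.ip a d • d) := by rw [T.sum_ip_smul]
    _ = ∑ d ∈ T.B, T.ip a d ^ 2 := by
      simp only [map_sum, map_smul, smul_eq_mul, sq]

theorem deg_eq_sum (a : A) : T.deg a = ∑ d ∈ T.B, T.ip a d * T.deg d := by
  conv_lhs => rw [← T.sum_ip_smul a]
  simp only [map_sum, map_smul, smul_eq_mul]

def HasNatCoeffs (a : A) : Prop := ∀ d ∈ T.B, ∃ n : ℕ, T.ip a d = n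

theorem hasNatCoeffs_mul (hInt : T.Integral) {b c : A} (hb : b ∈ T.B) (hc : c ∈ T.B) :
    T.HasNatCoeffs (b * c) :=
  fun d hd => hInt.1 b hb c hc d hd

variable {T}

theorem HasNatCoeffs.sub {a d : A} (ha : T.HasNatCoeffs a) (hd : d ∈ T.B)
    (had : T.ip a d ≠ 0) : T.HasNatCoeffs (a - d) := by
  intro e he
  obtain ⟨n, hn⟩ := ha e he
  rw [map_sub, LinearMap.sub_apply, hn]
  by_cases hde : d = e
  · subst hde
    obtain ⟨k, rfl⟩ : ∃ k, n = k + 1 := Nat.exists_eq_succ_of_ne_zero (by rintro rfl; simp_all)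
    exact ⟨k, by rw [T.ip_self d hd]; push_cast; ring⟩
  · exact ⟨n, by rw [T.ip_ne d hd e he hde, sub_zero]⟩

section ComplexOrder

open scoped ComplexOrder

theorem deg_pos_of_mem {d : A} (hd : d ∈ T.B) : 0 < T.deg d := by
  obtain ⟨r, hr, hdr⟩ := T.deg_pos d hd
  rw [hdr]
  exact_mod_cast hr

theorem HasNatCoeffs.ip_mul_deg_le {a d : A} (ha : T.HasNatCoeffs a) (hd : d ∈ T.B) :
    T.ip a d * T.deg d ≤ T.deg a := by
  rw [T.deg_eq_sum a]
  refine Finset.single_le_sum (f := fun e => T.ip a e * T.deg e) (fun e he => ?_) hd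
  obtain ⟨n, hn⟩ := ha e he
  exact mul_nonneg (by rw [hn]; exact Nat.cast_nonneg n) (deg_pos_of_mem he).le

theorem HasNatCoeffs.mem_of_ip_self_eq_one {a : A} (ha : T.HasNatCoeffs a)
    (h : T.ip a a = 1) : a ∈ T.B := by
  obtain ⟨d, hd, had⟩ := T.exists_ip_ne_zero (a := a) (by rintro rfl; simp at h)
  obtain ⟨n, hn⟩ := ha d hd
  have hsub := ha.sub hd had
  have hsq : ∀ e ∈ T.B, 0 ≤ T.ip (a - d) e ^ 2 := fun e he => by
    obtain ⟨k, hk⟩ := hsub e he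
    rw [hk]
    positivity
  have hnorm : T.ip (a - d) (a - d) = 2 - 2 * n := by
    simp only [map_sub, LinearMap.sub_apply]
    rw [h, hn, T.ip_symm d a, hn, T.ip_self d hd]
    ring
  have hn1 : n = 1 := by
    have h0 : 0 ≤ T.ip (a - d) (a - d) := by
      rw [T.ip_self_eq_sum_sq]
      exact Finset.sum_nonneg hsq
    rw [hnorm, sub_nonneg] at h0
    have : 2 * n ≤ 2 := by exact_mod_cast h0
    have : n ≠ 0 := by rintro rfl; simp_all
    omega
  have hzero : ∑ e ∈ T.B, T.ip (a - d) e ^ 2 = 0 := by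
    rw [← T.ip_self_eq_sum_sq, hnorm, hn1]
    norm_num
  rw [Finset.sum_eq_zero_iff_of_nonneg hsq] at hzero
  have had : a - d = 0 :=
    T.eq_zero_of_forall_ip_eq_zero fun e he => pow_eq_zero_iff two_ne_zero |>.mp (hzero e he)
  rwa [sub_eq_zero.mp had]

theorem HasNatCoeffs.mul_le {a d : A} (ha : T.HasNatCoeffs a) (hd : d ∈ T.B) {n m N : ℕ}
    (hn : T.ip a d = n) (hm : T.deg d = m) (hN : T.deg a = N) : n * m ≤ N := by
  have := ha.ip_mul_deg_le hd
  rw [hn, hm, hN] at this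
  exact_mod_cast this

end ComplexOrder

theorem HasNatCoeffs.ip_eq_zero_of_deg_lt {a e : A} (ha : T.HasNatCoeffs a) (he : e ∈ T.B)
    {m N : ℕ} (hm : T.deg e = m) (hN : T.deg a = N) (hlt : N < m) : T.ip a e = 0 := by
  obtain ⟨k, hk⟩ := ha e he
  have hkm := ha.mul_le he hk hm hN
  obtain rfl : k = 0 := by
    by_contra hk0
    have := Nat.le_mul_of_pos_left m (Nat.pos_of_ne_zero hk0)
    omega
  rw [hk, Nat.cast_zero]

theorem HasNatCoeffs.eq_zero_of_deg_eq_zero (hInt : T.Integral) {a : A} (ha : T.HasNatCoeffs a)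
    (hdeg : T.deg a = 0) : a = 0 :=
  T.eq_zero_of_forall_ip_eq_zero fun e he =>
    let ⟨_, hm0, hm⟩ := hInt.2 e he
    ha.ip_eq_zero_of_deg_lt he hm (N := 0) (by rw [hdeg, Nat.cast_zero]) hm0

theorem three_le_deg (hInt : T.Integral) (hSmall : T.NoSmall) {d : A} (hd : d ∈ T.B)
    (hd1 : d ≠ 1) {m : ℕ} (hm : T.deg d = m) : 3 ≤ m := by
  obtain ⟨n, hn0, hn⟩ := hInt.2 d hd
  obtain rfl : n = m := by exact_mod_cast hn.symm.trans hm
  have h1 : n ≠ 1 := by rintro rfl; exact hd1 (hSmall.1 d hd (by rw [hm, Nat.cast_one]))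
  have h2 : n ≠ 2 := by rintro rfl; exact hSmall.2 d hd (by rw [hm, Nat.cast_two])
  omega

theorem HasNatCoeffs.eq_zero_of_deg_lt_three (hInt : T.Integral) (hSmall : T.NoSmall) {a : A}
    (ha : T.HasNatCoeffs a) (h1 : T.ip a 1 = 0) {N : ℕ} (hN : T.deg a = N) (hN3 : N < 3) :
    a = 0 := by
  refine T.eq_zero_of_forall_ip_eq_zero fun e he => ?_
  by_cases he1 : e = 1
  · rwa [he1]
  obtain ⟨m, -, hm⟩ := hInt.2 e he
  exact ha.ip_eq_zero_of_deg_lt he hm hN (by have := three_le_deg hInt hSmall he he1 hm; omega)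

theorem HasNatCoeffs.mem_of_deg_lt_two_mul (hInt : T.Integral) {a : A} (ha : T.HasNatCoeffs a)
    {N : ℕ} (hN : T.deg a = N) (hN0 : N ≠ 0)
    (h : ∀ d ∈ T.B, ∀ m : ℕ, T.deg d = m → 2 * m ≤ N → T.ip a d = 0) : a ∈ T.B := by
  obtain ⟨d, hd, had⟩ := T.exists_ip_ne_zero (a := a) fun ha0 => hN0 <| by
    rw [ha0, map_zero] at hN
    exact_mod_cast hN.symm
  obtain ⟨n, hn⟩ := ha d hd
  obtain ⟨m, -, hm⟩ := hInt.2 d hd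
  have hnm := ha.mul_le hd hn hm hN
  have hmN : N < 2 * m := by
    by_contra hle
    exact had (h d hd m hm (by omega))
  have hn0 : n ≠ 0 := by rintro rfl; exact had (by rw [hn, Nat.cast_zero])
  have hdeg : T.deg (a - d) = (N - m : ℕ) := by
    have hmN' : m ≤ N := (Nat.le_mul_of_pos_left m (Nat.pos_of_ne_zero hn0)).trans hnm
    rw [map_sub, hN, hm, Nat.cast_sub hmN']
  suffices hz : a - d = 0 by rwa [sub_eq_zero.mp hz]
  refine T.eq_zero_of_forall_ip_eq_zero fun e he => ?_
  obtain ⟨m', -, hm'⟩ := hInt.2 e he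
  rcases lt_or_ge (N - m) m' with hlt | hle
  · exact (ha.sub hd had).ip_eq_zero_of_deg_lt he hm' hdeg hlt
  · have hde : T.ip d e = 0 :=
      T.ip_eq_zero_of_deg_ne hd he (by rw [hm, hm']; exact_mod_cast (by omega : m ≠ m'))
    rw [map_sub, LinearMap.sub_apply, h e he m' hm' (by omega), hde, sub_zero]

structure DegreeThreeSetting (T : TAData A) (b3 c8 b6 b10 : A) : Prop where
  integral : T.Integral
  noSmall : T.NoSmall
  b3_mem : b3 ∈ T.B
  deg_b3 : T.deg b3 = 3
  c8_mem : c8 ∈ T.B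
  deg_c8 : T.deg c8 = 8
  b3_mul_bar_b3 : b3 * T.bar b3 = 1 + c8
  b6_mem : b6 ∈ T.B
  deg_b6 : T.deg b6 = 6
  b3_mul_b3 : b3 * b3 = T.bar b3 + b6
  b10_mem : b10 ∈ T.B
  deg_b10 : T.deg b10 = 10
  bar_b10 : T.bar b10 = b10
  b3_mul_b6 : b3 * b6 = c8 + b10

namespace DegreeThreeSetting

variable {T : TAData A} {b3 c8 b6 b10 b15 c : A}

theorem bar_c8 (H : DegreeThreeSetting T b3 c8 b6 b10) : T.bar c8 = c8 := by
  have h := congrArg T.bar H.b3_mul_bar_b3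
  simp only [map_mul, map_add, map_one, T.bar_bar] at h
  linear_combination H.b3_mul_bar_b3 - h

theorem bar_b3_mul_bar_b3 (H : DegreeThreeSetting T b3 c8 b6 b10) :
    T.bar b3 * T.bar b3 = b3 + T.bar b6 := by
  simpa only [map_mul, map_add, T.bar_bar] using congrArg T.bar H.b3_mul_b3

theorem bar_b3_mul_bar_b6 (H : DegreeThreeSetting T b3 c8 b6 b10) :
    T.bar b3 * T.bar b6 = c8 + b10 := by
  simpa only [map_mul, map_add, H.bar_c8, H.bar_b10] using congrArg T.bar H.b3_mul_b6

theorem deg_bar_b3 (H : DegreeThreeSetting T b3 c8 b6 b10) : T.deg (T.bar b3) = 3 := by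
  have h := congrArg T.deg H.b3_mul_b3
  simp only [map_mul, map_add, H.deg_b3, H.deg_b6] at h
  linear_combination -h

theorem deg_bar_b6 (H : DegreeThreeSetting T b3 c8 b6 b10) : T.deg (T.bar b6) = 6 := by
  have h := congrArg T.deg H.bar_b3_mul_bar_b3
  simp only [map_mul, map_add, H.deg_b3, H.deg_bar_b3] at h
  linear_combination -h

theorem exists_bar_b3_mul_b6 (H : DegreeThreeSetting T b3 c8 b6 b10) :
    ∃ b15 ∈ T.B, T.bar b3 * b6 = b3 + b15 := by
  have hb3' := T.bar_mem b3 H.b3_mem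
  have hcoeff : T.ip (T.bar b3 * b6) b3 = 1 := by
    rw [T.ip_mul_left, T.bar_bar, H.b3_mul_b3, map_add, T.ip_self b6 H.b6_mem,
      T.ip_eq_zero_of_deg_ne H.b6_mem hb3' (by norm_num [H.deg_b6, H.deg_bar_b3]), zero_add]
  have hnorm : T.ip (T.bar b3 * b6) (T.bar b3 * b6) = 2 := by
    rw [T.ip_bar_mul_self, H.b3_mul_b6]
    simp only [map_add, LinearMap.add_apply]
    rw [T.ip_self c8 H.c8_mem, T.ip_self b10 H.b10_mem,
      T.ip_eq_zero_of_deg_ne H.c8_mem H.b10_mem (by norm_num [H.deg_c8, H.deg_b10]),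
      T.ip_eq_zero_of_deg_ne H.b10_mem H.c8_mem (by norm_num [H.deg_c8, H.deg_b10])]
    norm_num
  have hnat := (T.hasNatCoeffs_mul H.integral hb3' H.b6_mem).sub H.b3_mem
    (by rw [hcoeff]; exact one_ne_zero)
  refine ⟨_, hnat.mem_of_ip_self_eq_one ?_, (add_sub_cancel b3 _).symm⟩
  simp only [map_sub, LinearMap.sub_apply]
  rw [hnorm, hcoeff, T.ip_symm b3, hcoeff, T.ip_self b3 H.b3_mem]
  norm_num

theorem ip_b3_mul_b10_eq_zero (H : DegreeThreeSetting T b3 c8 b6 b10) {d : A}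
    (hd : d ∈ T.B) {m : ℕ} (hm : T.deg d = m) (hm4 : m ≤ 4) :
    T.ip (b3 * b10) d = 0 := by
  have hb3' := T.bar_mem b3 H.b3_mem
  have hnat := T.hasNatCoeffs_mul H.integral hb3' hd
  obtain ⟨k, hk⟩ := hnat b10 H.b10_mem
  rw [T.ip_mul_left, T.ip_symm, hk, Nat.cast_eq_zero]
  have hdeg : T.deg (T.bar b3 * d) = (3 * m : ℕ) := by
    rw [map_mul, H.deg_bar_b3, hm]
    push_cast
    ring
  have hk10 := hnat.mul_le H.b10_mem hk (m := 10) (by rw [H.deg_b10]; norm_num) hdeg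
  by_contra hk0
  obtain rfl : m = 4 := by omega
  -- `b̄₃ d - b₁₀` would be a nonzero element of degree 2 with no constituent `1`
  have h1 : T.ip (T.bar b3 * d - b10) 1 = 0 := by
    rw [map_sub, LinearMap.sub_apply, T.ip_mul_left, T.bar_bar, mul_one,
      T.ip_eq_zero_of_deg_ne hd H.b3_mem (by norm_num [hm, H.deg_b3]),
      T.ip_eq_zero_of_deg_ne H.b10_mem T.one_mem (by norm_num [H.deg_b10]), sub_zero]
  have hzero := (hnat.sub H.b10_mem (by rw [hk]; exact_mod_cast hk0)).eq_zero_of_deg_lt_three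
    H.integral H.noSmall h1 (N := 2) (by rw [map_sub, hdeg, H.deg_b10]; norm_num) (by norm_num)
  have := congrArg T.deg (sub_eq_zero.mp hzero)
  rw [hdeg, H.deg_b10] at this
  norm_num at this

section b15

variable (h15 : T.bar b3 * b6 = b3 + b15)
include h15

theorem b3_mul_bar_b6 : b3 * T.bar b6 = T.bar b3 + T.bar b15 := by
  simpa only [map_mul, map_add, T.bar_bar] using congrArg T.bar h15

variable (H : DegreeThreeSetting T b3 c8 b6 b10)
include H

theorem deg_b15 : T.deg b15 = 15 := by
  have h := congrArg T.deg h15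
  simp only [map_mul, map_add, H.deg_b3, H.deg_bar_b3, H.deg_b6] at h
  linear_combination -h

theorem b3_mul_c8 : b3 * c8 = b3 + T.bar b6 + b15 := by
  linear_combination (-b3) * H.b3_mul_bar_b3 + T.bar b3 * H.b3_mul_b3 + H.bar_b3_mul_bar_b3 + h15

theorem bar_b3_mul_c8 : T.bar b3 * c8 = T.bar b3 + b6 + T.bar b15 := by
  simpa only [map_mul, map_add, T.bar_bar, H.bar_c8] using congrArg T.bar (H.b3_mul_c8 h15)

theorem deg_bar_b15 : T.deg (T.bar b15) = 15 := by
  have h := congrArg T.deg (b3_mul_bar_b6 h15)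
  simp only [map_mul, map_add, H.deg_b3, H.deg_bar_b3, H.deg_bar_b6] at h
  linear_combination -h

theorem bar_b3_mul_b15 : T.bar b3 * b15 = b6 * T.bar b6 + b10 - 1 := by
  linear_combination (-T.bar b3) * h15 + b6 * H.bar_b3_mul_bar_b3 + H.b3_mul_b6 - H.b3_mul_bar_b3

theorem exists_b3_mul_b10 (hb15 : b15 ∈ T.B) : ∃ c ∈ T.B, b3 * b10 = T.bar b6 + b15 + c := by
  have hb6' := T.bar_mem b6 H.b6_mem
  have hcoeff6 : T.ip (b3 * b10) (T.bar b6) = 1 := by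
    rw [T.ip_mul_left, H.bar_b3_mul_bar_b6, map_add, T.ip_self b10 H.b10_mem,
      T.ip_eq_zero_of_deg_ne H.b10_mem H.c8_mem (by norm_num [H.deg_b10, H.deg_c8]), zero_add]
  obtain ⟨t, ht⟩ := T.hasNatCoeffs_mul H.integral H.b6_mem hb6' b10 H.b10_mem
  have hcoeff15 : T.ip (b3 * b10 - T.bar b6) b15 = t + 1 := by
    rw [map_sub, LinearMap.sub_apply, T.ip_mul_left, H.bar_b3_mul_b15 h15, map_sub, map_add,
      T.ip_symm b10, ht, T.ip_self b10 H.b10_mem,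
      T.ip_eq_zero_of_deg_ne H.b10_mem T.one_mem (by norm_num [H.deg_b10]),
      T.ip_eq_zero_of_deg_ne hb6' hb15 (by norm_num [H.deg_bar_b6, H.deg_b15 h15])]
    ring
  have hnat := ((T.hasNatCoeffs_mul H.integral H.b3_mem H.b10_mem).sub hb6'
    (by rw [hcoeff6]; exact one_ne_zero)).sub hb15 (by rw [hcoeff15]; exact_mod_cast t.succ_ne_zero)
  have hdeg : T.deg (b3 * b10 - T.bar b6 - b15) = (9 : ℕ) := by
    simp only [map_sub, map_mul, H.deg_b3, H.deg_b10, H.deg_bar_b6, H.deg_b15 h15]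
    norm_num
  refine ⟨_, hnat.mem_of_deg_lt_two_mul H.integral hdeg (by norm_num) fun d hd m hm h2m => ?_,
    by ring⟩
  rw [map_sub, map_sub, LinearMap.sub_apply, LinearMap.sub_apply,
    H.ip_b3_mul_b10_eq_zero hd hm (by omega),
    T.ip_eq_zero_of_deg_ne hb6' hd (by rw [H.deg_bar_b6, hm]; exact_mod_cast (by omega : 6 ≠ m)),
    T.ip_eq_zero_of_deg_ne hb15 hd (by rw [H.deg_b15 h15, hm]; exact_mod_cast (by omega : 15 ≠ m))]
  ring

variable (hc : b3 * b10 = T.bar b6 + b15 + c)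
include hc

theorem deg_c : T.deg c = 9 := by
  have h := congrArg T.deg hc
  simp only [map_mul, map_add, H.deg_b3, H.deg_b10, H.deg_bar_b6, H.deg_b15 h15] at h
  linear_combination -h

theorem b6_mul_b6 : b6 * b6 = 2 * T.bar b6 + c + b15 := by
  linear_combination b3 * H.b3_mul_b6 - b6 * H.b3_mul_b3 - h15 + H.b3_mul_c8 h15 + hc

theorem deg_bar_c : T.deg (T.bar c) = 9 := by
  have h := congrArg T.deg (congrArg T.bar hc)
  simp only [map_mul, map_add, H.bar_b10, T.bar_bar, H.deg_bar_b3, H.deg_b10, H.deg_b6,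
    H.deg_bar_b15 h15] at h
  linear_combination -h

theorem bar_b6_mul_bar_b6 : T.bar b6 * T.bar b6 = 2 * b6 + T.bar c + T.bar b15 := by
  simpa only [map_mul, map_add, map_ofNat, T.bar_bar] using congrArg T.bar (H.b6_mul_b6 h15 hc)

theorem ip_b6_mul_bar_b6_b10 (hb15 : b15 ∈ T.B) (hcB : c ∈ T.B) :
    T.ip (b6 * T.bar b6) b10 = 0 := by
  have e1 : T.ip (b3 * b10) b15 = T.ip (b6 * T.bar b6) b10 + 1 := by
    rw [T.ip_mul_left, H.bar_b3_mul_b15 h15, map_sub, map_add, T.ip_symm b10,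
      T.ip_self b10 H.b10_mem, T.ip_eq_zero_of_deg_ne H.b10_mem T.one_mem (by norm_num [H.deg_b10])]
    ring
  have e2 : T.ip (b3 * b10) b15 = 1 := by
    rw [hc, map_add, map_add, LinearMap.add_apply, LinearMap.add_apply, T.ip_self b15 hb15,
      T.ip_eq_zero_of_deg_ne (T.bar_mem b6 H.b6_mem) hb15
        (by norm_num [H.deg_bar_b6, H.deg_b15 h15]),
      T.ip_eq_zero_of_deg_ne hcB hb15 (by norm_num [H.deg_c h15 hc, H.deg_b15 h15])]
    ring
  linear_combination e2 - e1

theorem ip_b3_mul_c_bar_b15 (hb15 : b15 ∈ T.B) (hcB : c ∈ T.B) :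
    T.ip (b3 * c) (T.bar b15) = 1 := by
  have hb6b15 : b6 * b15 = c8 + b10 + b10 - 1 + b6 * T.bar b6 + T.bar b3 * c := by
    linear_combination (-b6) * h15 + T.bar b3 * H.b6_mul_b6 h15 hc - H.b3_mul_b6 +
      2 * H.bar_b3_mul_bar_b6 + H.bar_b3_mul_b15 h15
  have hb6b10 : b6 * b10 = T.bar b3 + T.bar b15 + T.bar b15 + b3 * c := by
    linear_combination (-b6) * H.b3_mul_b6 + b3 * H.b6_mul_b6 h15 hc +
      2 * b3_mul_bar_b6 h15 - b3 * h15 - H.b3_mul_b3 + b6 * H.b3_mul_bar_b3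
  have hcoeff : T.ip (T.bar b3 * c) b10 = 1 := by
    rw [T.ip_mul_left, T.bar_bar, hc, map_add, map_add, T.ip_self c hcB,
      T.ip_eq_zero_of_deg_ne hcB (T.bar_mem b6 H.b6_mem)
        (by norm_num [H.deg_c h15 hc, H.deg_bar_b6]),
      T.ip_eq_zero_of_deg_ne hcB hb15 (by norm_num [H.deg_c h15 hc, H.deg_b15 h15])]
    ring
  -- the coefficient of `b₁₀` in `b₆ b₁₅` is read off in two ways
  have key := T.ip_mul_bar_comm b6 b15 b10
  rw [H.bar_b10, hb6b15, hb6b10] at key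
  simp only [map_add, map_sub, LinearMap.add_apply, LinearMap.sub_apply] at key
  rw [T.ip_self b10 H.b10_mem, T.ip_self _ (T.bar_mem b15 hb15), hcoeff,
    H.ip_b6_mul_bar_b6_b10 h15 hc hb15 hcB,
    T.ip_eq_zero_of_deg_ne H.c8_mem H.b10_mem (by norm_num [H.deg_c8, H.deg_b10]),
    T.ip_eq_zero_of_deg_ne T.one_mem H.b10_mem (by norm_num [H.deg_b10]),
    T.ip_eq_zero_of_deg_ne (T.bar_mem b3 H.b3_mem) (T.bar_mem b15 hb15)
      (by norm_num [H.deg_bar_b3, H.deg_bar_b15 h15])] at key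
  linear_combination -key

theorem ip_b3_mul_b15_bar_b15 (hb15 : b15 ∈ T.B) (hcB : c ∈ T.B) :
    T.ip (b3 * b15) (T.bar b15) = 2 := by
  have hb3b15 : b3 * b15 = c8 * b6 - T.bar b3 := by
    linear_combination b6 * H.b3_mul_bar_b3 - b3 * h15 - H.b3_mul_b3
  have hc8b15 : c8 * T.bar b15 = b6 + T.bar b15 + T.bar c + T.bar b6 * b15 := by
    linear_combination (1 - c8) * b3_mul_bar_b6 h15 + T.bar b6 * H.b3_mul_c8 h15 -
      H.bar_b3_mul_c8 h15 + H.bar_b6_mul_bar_b6 h15 hc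
  have hb6 : T.ip b6 (T.bar b6 * b15) = 1 := by
    rw [← T.ip_mul_left, H.b6_mul_b6 h15 hc, two_mul]
    simp only [map_add, LinearMap.add_apply]
    rw [T.ip_self b15 hb15,
      T.ip_eq_zero_of_deg_ne (T.bar_mem b6 H.b6_mem) hb15
        (by norm_num [H.deg_bar_b6, H.deg_b15 h15]),
      T.ip_eq_zero_of_deg_ne hcB hb15 (by norm_num [H.deg_c h15 hc, H.deg_b15 h15])]
    ring
  rw [hb3b15, map_sub, LinearMap.sub_apply, T.ip_mul_left, H.bar_c8, hc8b15]
  simp only [map_add]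
  rw [hb6, T.ip_self b6 H.b6_mem,
    T.ip_eq_zero_of_deg_ne H.b6_mem (T.bar_mem b15 hb15)
      (by norm_num [H.deg_b6, H.deg_bar_b15 h15]),
    T.ip_eq_zero_of_deg_ne H.b6_mem (T.bar_mem c hcB) (by norm_num [H.deg_b6, H.deg_bar_c h15 hc]),
    T.ip_eq_zero_of_deg_ne (T.bar_mem b3 H.b3_mem) (T.bar_mem b15 hb15)
      (by norm_num [H.deg_bar_b3, H.deg_bar_b15 h15])]
  ring

theorem b3_mul_b15 (hb15 : b15 ∈ T.B) (hcB : c ∈ T.B) :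
    b3 * b15 = 2 * T.bar b15 + b6 + T.bar c := by
  have hb15' := T.bar_mem b15 hb15
  have hc' := T.bar_mem c hcB
  have h6 : T.ip (b3 * b15) b6 = 1 := by
    rw [T.ip_mul_left, h15, map_add, T.ip_self b15 hb15,
      T.ip_eq_zero_of_deg_ne hb15 H.b3_mem (by norm_num [H.deg_b15 h15, H.deg_b3]), zero_add]
  have h15' := H.ip_b3_mul_b15_bar_b15 h15 hc hb15 hcB
  have hc9 : T.ip (b3 * b15) (T.bar c) = 1 := by
    rw [T.ip_mul_bar_comm, H.ip_b3_mul_c_bar_b15 h15 hc hb15 hcB]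
  have h6_15 := T.ip_eq_zero_of_deg_ne H.b6_mem hb15' (by norm_num [H.deg_b6, H.deg_bar_b15 h15])
  have h6_9 := T.ip_eq_zero_of_deg_ne H.b6_mem hc' (by norm_num [H.deg_b6, H.deg_bar_c h15 hc])
  have h15_9 := T.ip_eq_zero_of_deg_ne hb15' hc'
    (by norm_num [H.deg_bar_b15 h15, H.deg_bar_c h15 hc])
  have h15_15 := T.ip_self _ hb15'
  have hnat := T.hasNatCoeffs_mul H.integral H.b3_mem hb15
  have hnat' := (((hnat.sub H.b6_mem (by norm_num [h6])).sub hb15'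
    (by simp only [map_sub, LinearMap.sub_apply]; norm_num [h15', h6_15])).sub hb15'
    (by simp only [map_sub, LinearMap.sub_apply]; norm_num [h15', h6_15, h15_15])).sub hc'
    (by simp only [map_sub, LinearMap.sub_apply]; norm_num [hc9, h6_9, h15_9])
  have hzero := hnat'.eq_zero_of_deg_eq_zero H.integral (by
    simp only [map_sub, map_mul, H.deg_b3, H.deg_b15 h15, H.deg_b6, H.deg_bar_b15 h15,
      H.deg_bar_c h15 hc]
    norm_num)
  linear_combination hzero

end b15

end DegreeThreeSetting

end TAData

theorem stmt_10_general {A : Type} [CommRing A] [Algebra ℂ A] (T : TAData A)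
    (hInt : T.Integral) (hSmall : T.NoSmall)
    (b3 c8 b6 b10 : A)
    (hb3 : b3 ∈ T.B) (hd3 : T.deg b3 = 3)
    (hc8 : c8 ∈ T.B) (hd8 : T.deg c8 = 8)
    (hmul : b3 * T.bar b3 = 1 + c8)
    (hb6 : b6 ∈ T.B) (hd6 : T.deg b6 = 6)
    (hsq : b3 * b3 = T.bar b3 + b6)
    (hb10 : b10 ∈ T.B) (hd10 : T.deg b10 = 10) (hreal10 : T.bar b10 = b10)
    (hprod : b3 * b6 = c8 + b10) :
    ∃ b15 ∈ T.B, T.deg b15 = 15 ∧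
      T.bar b3 * b6 = b3 + b15 ∧
      b3 * c8 = b3 + T.bar b6 + b15 ∧
      ∃ c9 ∈ T.B, T.deg c9 = 9 ∧
        b3 * b10 = b15 + T.bar b6 + T.bar c9 ∧
        b3 * b15 = 2 * T.bar b15 + b6 + c9 ∧
        b6 * b6 = 2 * T.bar b6 + T.bar c9 + b15 := by
  have H : T.DegreeThreeSetting b3 c8 b6 b10 :=
    ⟨hInt, hSmall, hb3, hd3, hc8, hd8, hmul, hb6, hd6, hsq, hb10, hd10, hreal10, hprod⟩
  obtain ⟨b15, hb15, h15⟩ := H.exists_bar_b3_mul_b6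
  obtain ⟨c, hcB, hc⟩ := H.exists_b3_mul_b10 h15 hb15
  refine ⟨b15, hb15, H.deg_b15 h15, h15, H.b3_mul_c8 h15, T.bar c, T.bar_mem c hcB,
    H.deg_bar_c h15 hc, ?_, H.b3_mul_b15 h15 hc hb15 hcB, ?_⟩
  · rw [T.bar_bar, hc]
    ring
  · rw [T.bar_bar, H.b6_mul_b6 h15 hc]

/-- Lemma 5.1, parts 1–6: under Hypothesis 5.1 with `b₁₀`
real, `b̄₃b₆ = b₃ + b₁₅`, `b₃c₈ = b₃ + b̄₆ + b₁₅`, `b₃b₁₀ = b₁₅ + b̄₆ + c̄₉`,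
`b₃b₁₅ = 2b̄₁₅ + b₆ + c₉` and `b₆² = 2b̄₆ + c̄₉ + b₁₅`. -/
theorem stmt_10 {A : Type} [CommRing A] [Algebra ℂ A] (T : TAData A)
    (hInt : T.Integral) (hSmall : T.NoSmall)
    (b3 c8 b6 b10 : A)
    (hb3 : b3 ∈ T.B) (hd3 : T.deg b3 = 3) (hnr : T.bar b3 ≠ b3)
    (hgen : T.GeneratedBy b3)
    (hc8 : c8 ∈ T.B) (hd8 : T.deg c8 = 8)
    (hmul : b3 * T.bar b3 = 1 + c8)
    (hb6 : b6 ∈ T.B) (hd6 : T.deg b6 = 6) (hnr6 : T.bar b6 ≠ b6)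
    (hsq : b3 * b3 = T.bar b3 + b6)
    (hb10 : b10 ∈ T.B) (hd10 : T.deg b10 = 10) (hreal10 : T.bar b10 = b10)
    (hprod : b3 * b6 = c8 + b10) :
    ∃ b15 ∈ T.B, T.deg b15 = 15 ∧
      T.bar b3 * b6 = b3 + b15 ∧
      b3 * c8 = b3 + T.bar b6 + b15 ∧
      ∃ c9 ∈ T.B, T.deg c9 = 9 ∧
        b3 * b10 = b15 + T.bar b6 + T.bar c9 ∧
        b3 * b15 = 2 * T.bar b15 + b6 + c9 ∧
        b6 * b6 = 2 * T.bar b6 + T.bar c9 + b15 :=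
  stmt_10_general T hInt hSmall b3 c8 b6 b10 hb3 hd3 hc8 hd8 hmul hb6 hd6 hsq hb10 hd10 hreal10
    hprod
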